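/- arXiv:2207.04342 — 8 statements merged into one kernel-verified Lean document; each statement's English description precedes it below -/
import Mathlib

section
/- For any finite set A and any subset R ⊆ A, the function f_{A,R} is submodular: f_{A,R}(X) + f_{A,R}(Y) ≥ f_{A,R}(X ∪ Y) + f_{A,R}(X ∩ Y) for all X, Y ⊆ A. -/
open Finset

variable {α : Type*}

/-- The function `f_{A,R}`: 0 on `R`, 1 on strict subsets/supersets of `R`, 2 otherwise. -/
noncomputable def fAR [DecidableEq α] (R T : Finset α) : ℝ :=
  if T = R then 0 else if T ⊂ R ∨ R ⊂ T then 1 else 2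

/-- The submodularizer `φ` on subsets of `V`, where `B = V \ A`:
`φ(S) = |S ∩ B|` if `S ∩ A ⊊ R`, `-|S ∩ B|` if `S ∩ A ⊋ R`, and `0` otherwise. -/
noncomputable def phi [DecidableEq α] (A R B S : Finset α) : ℝ :=
  if S ∩ A ⊂ R then ((S ∩ B).card : ℝ)
  else if R ⊂ S ∩ A then -((S ∩ B).card : ℝ)
  else 0

/-- The main building block
`F(S) = f_{A,R}(S ∩ A) + (1/(2n)) φ(S) + (1/(4Mn)) ⋅ 1[S ∩ A = R] ⋅ g(S ∩ B)`. -/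
noncomputable def Fbb [DecidableEq α] (n : ℕ) (A R B : Finset α) (M : ℝ)
    (g : Finset α → ℝ) (S : Finset α) : ℝ :=
  fAR R (S ∩ A) + (1 / (2 * (n : ℝ))) * phi A R B S
    + (1 / (4 * M * (n : ℝ))) * (if S ∩ A = R then (1 : ℝ) else 0) * g (S ∩ B)

/-! `fAR R T = [T ⊄ R] + [R ⊄ T]`, and on any lattice both the indicator of the complement of a
principal ideal `{x | x ≤ a}` and that of the complement of a principal filter `{x | a ≤ x}` are
submodular; the second is the first in the order dual, where `⊔` and `⊓` trade places. -/

def IsSubmodular {β : Type*} [Lattice β] (f : β → ℝ) : Prop :=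
  ∀ x y, f (x ⊔ y) + f (x ⊓ y) ≤ f x + f y

section Lattice

variable {β : Type*} [Lattice β]

theorem IsSubmodular.add {f g : β → ℝ} (hf : IsSubmodular f) (hg : IsSubmodular g) :
    IsSubmodular (f + g) := fun x y => by
  simpa only [Pi.add_apply, add_add_add_comm] using add_le_add (hf x y) (hg x y)

variable [DecidableLE β]

theorem isSubmodular_ite_le (a : β) : IsSubmodular fun x => if x ≤ a then (0 : ℝ) else 1 := by
  intro x y
  by_cases hx : x ≤ a <;> by_cases hy : y ≤ a
  · simp [hx, hy, sup_le hx hy, inf_le_of_left_le hx]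
  · simp [hx, hy, inf_le_of_left_le hx]
  · simp [hx, hy, inf_le_of_right_le hy]
  · have hxy : ¬x ⊔ y ≤ a := fun h => hx (le_sup_left.trans h)
    simp only [hx, hy, hxy, if_false]
    split_ifs <;> norm_num

theorem isSubmodular_ite_ge (a : β) : IsSubmodular fun x => if a ≤ x then (0 : ℝ) else 1 :=
  fun x y => by
    simpa only [← _root_.toDual_sup, ← _root_.toDual_inf, OrderDual.toDual_le_toDual, add_comm]
      using isSubmodular_ite_le (OrderDual.toDual a) (OrderDual.toDual x) (OrderDual.toDual y)

end Lattice

theorem fAR_eq_add [DecidableEq α] (R : Finset α) :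
    fAR R = (fun T => if T ≤ R then 0 else 1) + fun T => if R ≤ T then 0 else 1 := by
  ext T
  by_cases h : T ⊆ R <;> by_cases h' : R ⊆ T
  · simp [fAR, Subset.antisymm h h']
  all_goals norm_num [fAR, ssubset_def, Subset.antisymm_iff, h, h']

theorem isSubmodular_fAR [DecidableEq α] (R : Finset α) : IsSubmodular (fAR R) := by
  rw [fAR_eq_add]
  exact (isSubmodular_ite_le R).add (isSubmodular_ite_ge R)

theorem fAR_submodular_general [DecidableEq α] (A R : Finset α) :
    ∀ X Y : Finset α, X ⊆ A → Y ⊆ A →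
      fAR R (X ∪ Y) + fAR R (X ∩ Y) ≤ fAR R X + fAR R Y :=
  fun X Y _ _ => isSubmodular_fAR R X Y

/-- for any finite set `A` and `R ⊆ A`, the function `f_{A,R}` is submodular:
`f(X) + f(Y) ≥ f(X ∪ Y) + f(X ∩ Y)` for all `X, Y ⊆ A`. -/
theorem fAR_submodular [DecidableEq α] (A R : Finset α) (hRA : R ⊆ A) :
    ∀ X Y : Finset α, X ⊆ A → Y ⊆ A →
      fAR R (X ∪ Y) + fAR R (X ∩ Y) ≤ fAR R X + fAR R Y :=
  fAR_submodular_general A R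
end

section
/- Suppose R ⊊ A ⊆ V, |A \ R| ≥ 2, and B := V \ A is nonempty. Then φ is not submodular: there exist sets X ⊆ Y ⊆ V and an element e ∈ V \ Y such that φ(X ∪ {e}) − φ(X) < φ(Y ∪ {e}) − φ(Y). -/
open Finset

variable {α : Type*}

/-! Pick `b ∈ V \ A` and distinct `a₁, a₂ ∈ A \ R`, and let `X = R ∪ {b}`, `Y = X ∪ {a₁}`.
Adding `a₂` to `X` lifts `X ∩ A = R` strictly above `R`, so `φ` drops from `0` to `-|X ∩ B| < 0`;
adding it to `Y`, whose trace on `A` is already strictly above `R`, leaves `φ` unchanged. -/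

section Phi

variable [DecidableEq α] {A R B S : Finset α} {a : α}

theorem phi_of_inter_eq (hS : S ∩ A = R) : phi A R B S = 0 := by
  simp [phi, hS]

theorem phi_of_ssubset_inter (hS : R ⊂ S ∩ A) : phi A R B S = -((S ∩ B).card : ℝ) := by
  rw [phi, if_neg (asymm hS), if_pos hS]

theorem phi_insert_sub_of_inter_eq (hS : S ∩ A = R) (haA : a ∈ A) (haR : a ∉ R) (haB : a ∉ B) :
    phi A R B (insert a S) - phi A R B S = -((S ∩ B).card : ℝ) := by
  have hlift : R ⊂ insert a S ∩ A := by
    rw [insert_inter_of_mem haA, hS]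
    exact ssubset_insert haR
  rw [phi_of_ssubset_inter hlift, phi_of_inter_eq hS, insert_inter_of_notMem haB, sub_zero]

theorem phi_insert_sub_of_ssubset_inter (hS : R ⊂ S ∩ A) (haA : a ∈ A) (haB : a ∉ B) :
    phi A R B (insert a S) - phi A R B S = 0 := by
  have hlift : R ⊂ insert a S ∩ A := by
    rw [insert_inter_of_mem haA]
    exact hS.trans_subset (subset_insert _ _)
  rw [phi_of_ssubset_inter hlift, phi_of_ssubset_inter hS, insert_inter_of_notMem haB, sub_self]

end Phi

/-- if `R ⊊ A ⊆ V`, `|A \ R| ≥ 2` and `B := V \ A` is nonempty, then `φ`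
is not submodular: there are `X ⊆ Y ⊆ V` and `e ∈ V \ Y` with
`φ(X ∪ {e}) − φ(X) < φ(Y ∪ {e}) − φ(Y)`. -/
theorem phi_not_submodular [DecidableEq α] (V A R : Finset α)
    (hRA : R ⊂ A) (hAV : A ⊆ V) (hcard : 2 ≤ (A \ R).card) (hB : (V \ A).Nonempty) :
    ∃ X Y : Finset α, X ⊆ Y ∧ Y ⊆ V ∧ ∃ e ∈ V \ Y,
      phi A R (V \ A) (X ∪ {e}) - phi A R (V \ A) X
        < phi A R (V \ A) (Y ∪ {e}) - phi A R (V \ A) Y := by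
  obtain ⟨b, hb⟩ := hB
  obtain ⟨hbV, hbA⟩ := mem_sdiff.mp hb
  obtain ⟨a₁, ha₁, a₂, ha₂, hne⟩ := one_lt_card.mp (by omega : 1 < (A \ R).card)
  rw [mem_sdiff] at ha₁ ha₂
  have ha₂B : a₂ ∉ V \ A := notMem_sdiff_of_mem_right ha₂.1
  have hXA : insert b R ∩ A = R := by
    rw [insert_inter_of_notMem hbA, inter_eq_left.mpr hRA.subset]
  have hYA : R ⊂ insert a₁ (insert b R) ∩ A := by
    rw [insert_inter_of_mem ha₁.1, hXA]
    exact ssubset_insert ha₁.2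
  have hXB : 0 < (insert b R ∩ (V \ A)).card :=
    card_pos.mpr ⟨b, mem_inter.mpr ⟨mem_insert_self _ _, hb⟩⟩
  refine ⟨insert b R, insert a₁ (insert b R), subset_insert _ _,
    insert_subset (hAV ha₁.1) (insert_subset hbV (hRA.subset.trans hAV)), a₂, ?_, ?_⟩
  · simp only [mem_sdiff, mem_insert, not_or]
    exact ⟨hAV ha₂.1, hne.symm, fun h => hbA (h ▸ ha₂.1), ha₂.2⟩
  · rw [union_singleton, union_singleton,
      phi_insert_sub_of_inter_eq hXA ha₂.1 ha₂.2 ha₂B,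
      phi_insert_sub_of_ssubset_inter hYA ha₂.1 ha₂B]
    exact neg_neg_of_pos (by exact_mod_cast hXB)
end

section
/- Assume 0 ≤ g(T) ≤ M for all T ⊆ B, and that g has a unique minimizer S* ⊆ B, i.e., g(T) > g(S*) for every T ⊆ B with T ≠ S*. Then F has the unique minimizer R ∪ S*: for every S ⊆ V with S ≠ R ∪ S*, F(S) > F(R ∪ S*). -/
open Finset

variable {α : Type*}

theorem union_inter_of_subset_of_disjoint [DecidableEq α] {s t u : Finset α} (hs : s ⊆ u)
    (ht : Disjoint t u) : (s ∪ t) ∩ u = s := by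
  rw [union_inter_distrib_right, inter_eq_left.2 hs, disjoint_iff_inter_eq_empty.1 ht, union_empty]

theorem inter_union_inter_sdiff_of_subset [DecidableEq α] {S V A : Finset α} (hSV : S ⊆ V) :
    S ∩ A ∪ S ∩ (V \ A) = S := by
  grind

section

variable [DecidableEq α] {n : ℕ} {A R B S : Finset α} {M : ℝ} {g : Finset α → ℝ}

theorem one_le_fAR_of_ne {T : Finset α} (h : T ≠ R) : 1 ≤ fAR R T := by
  rw [fAR, if_neg h]
  split_ifs <;> norm_num

theorem neg_card_le_phi : -((S ∩ B).card : ℝ) ≤ phi A R B S := by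
  unfold phi
  split_ifs <;> simp

theorem Fbb_of_inter_eq (h : S ∩ A = R) :
    Fbb n A R B M g S = 1 / (4 * M * n) * g (S ∩ B) := by
  simp [Fbb, fAR, phi, h]

theorem Fbb_le_quarter_of_inter_eq (h : S ∩ A = R) (hgM : g (S ∩ B) ≤ M) (hM : 0 < M)
    (hn : 1 ≤ n) : Fbb n A R B M g S ≤ 1 / 4 := by
  have hn' : (1 : ℝ) ≤ n := by exact_mod_cast hn
  rw [Fbb_of_inter_eq h, div_mul_eq_mul_div, one_mul, div_le_div_iff₀ (by positivity) four_pos]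
  nlinarith

/-- Off the slice `S ∩ A = R`, the `f_{A,R}` term is at least `1` and the `φ` term costs at most
`1/2`, because `|S ∩ B| ≤ n`. -/
theorem half_le_Fbb_of_inter_ne (h : S ∩ A ≠ R) (hcard : (S ∩ B).card ≤ n) :
    1 / 2 ≤ Fbb n A R B M g S := by
  have hf : 1 ≤ fAR R (S ∩ A) := one_le_fAR_of_ne h
  have hphi : -(1 / 2) ≤ 1 / (2 * (n : ℝ)) * phi A R B S := by
    calc -(1 / 2 : ℝ) ≤ 1 / (2 * n) * -((S ∩ B).card : ℝ) := by
          rw [mul_neg, neg_le_neg_iff, div_mul_eq_mul_div, one_mul]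
          have hcard' : ((S ∩ B).card : ℝ) ≤ n := by exact_mod_cast hcard
          exact div_le_of_le_mul₀ (by positivity) (by norm_num) (by linarith)
      _ ≤ 1 / (2 * n) * phi A R B S := by gcongr; exact neg_card_le_phi
  simp only [Fbb, if_neg h, mul_zero, zero_mul, add_zero]
  linarith

end

theorem Fbb_unique_minimizer_general [DecidableEq α] (V A R : Finset α) (hV : 1 ≤ V.card)
    (hRA : R ⊆ A)
    (M : ℝ) (hM : 0 < M) (g : Finset α → ℝ)
    (hg : ∀ T ⊆ V \ A, 0 ≤ g T ∧ g T ≤ M)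
    (Sstar : Finset α) (hSstar : Sstar ⊆ V \ A)
    (hmin : ∀ T ⊆ V \ A, T ≠ Sstar → g Sstar < g T) :
    ∀ S ⊆ V, S ≠ R ∪ Sstar →
      Fbb V.card A R (V \ A) M g (R ∪ Sstar) < Fbb V.card A R (V \ A) M g S := by
  intro S hSV hSne
  have hA₀ : (R ∪ Sstar) ∩ A = R :=
    union_inter_of_subset_of_disjoint hRA (disjoint_of_subset_left hSstar sdiff_disjoint)
  have hB₀ : (R ∪ Sstar) ∩ (V \ A) = Sstar := by
    rw [union_comm]
    exact union_inter_of_subset_of_disjoint hSstar (disjoint_of_subset_left hRA disjoint_sdiff)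
  by_cases hSA : S ∩ A = R
  · have hSB : S ∩ (V \ A) ≠ Sstar :=
      fun hSB ↦ hSne (by rw [← inter_union_inter_sdiff_of_subset (A := A) hSV, hSA, hSB])
    rw [Fbb_of_inter_eq hA₀, Fbb_of_inter_eq hSA, hB₀]
    have hV' : (0 : ℝ) < V.card := by exact_mod_cast hV
    gcongr
    exact hmin _ inter_subset_right hSB
  · calc Fbb V.card A R (V \ A) M g (R ∪ Sstar) ≤ 1 / 4 :=
          Fbb_le_quarter_of_inter_eq hA₀ (by rw [hB₀]; exact (hg Sstar hSstar).2) hM hV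
      _ < 1 / 2 := by norm_num
      _ ≤ Fbb V.card A R (V \ A) M g S :=
          half_le_Fbb_of_inter_ne hSA (card_le_card (inter_subset_left.trans hSV))

/-- if `0 ≤ g ≤ M` on subsets of `B` and `g` has a unique minimizer `S* ⊆ B`,
then `F` has the unique minimizer `R ∪ S*`. -/
theorem Fbb_unique_minimizer [DecidableEq α] (V A R : Finset α) (hV : 1 ≤ V.card)
    (hA : A.Nonempty) (hR : R.Nonempty) (hRA : R ⊆ A) (hAV : A ⊆ V)
    (M : ℝ) (hM : 0 < M) (g : Finset α → ℝ)
    (hg : ∀ T ⊆ V \ A, 0 ≤ g T ∧ g T ≤ M)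
    (Sstar : Finset α) (hSstar : Sstar ⊆ V \ A)
    (hmin : ∀ T ⊆ V \ A, T ≠ Sstar → g Sstar < g T) :
    ∀ S ⊆ V, S ≠ R ∪ Sstar →
      Fbb V.card A R (V \ A) M g (R ∪ Sstar) < Fbb V.card A R (V \ A) M g S :=
  Fbb_unique_minimizer_general V A R hV hRA M hM g hg Sstar hSstar hmin
end

section
/- Assume g is submodular and 0 ≤ g(T) ≤ M for all T ⊆ B. Then F is submodular: F(X) + F(Y) ≥ F(X ∪ Y) + F(X ∩ Y) for all X, Y ⊆ V. -/
open Finset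

variable {α : Type*}

/-!
Write `F(S) = G(S ∩ A, S ∩ B)`. Since `f_{A,R}(t) = 2 - [t ⊆ R] - [R ⊆ t]` and
`φ(S) = ([t ⊆ R] - [R ⊆ t]) |S ∩ B|`, with `c = 1/(2n)` and `w = g/(4Mn) ∈ [0, c]` one has
`G(t, s) = 2 - [t ⊆ R] (1 - c|s|) - [R ⊆ t] (1 + c|s|) + [t = R] w(s)` (this is `Fpair`).
The indicator of the down-set `{t ⊆ R}` times the nonnegative, antitone, modular weight
`1 - c|s|` is supermodular, and so is the indicator of the up-set `{R ⊆ t}` times `1 + c|s|`;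
hence `G` without its last term is submodular. That term matters only when `a ∪ b = R` or
`a ∩ b = R`: then `a` and `b` are comparable with `R`, every value of `G` is explicit, and a jump
of `w` (at most `c`) between nested sets `s ⊊ s'` is paid for by the change `c(|s'| - |s|) ≥ c`
of the cardinality terms.
-/

lemma abs_sub_le_mul_card_sub {w : Finset α → ℝ} {c : ℝ} {s s' : Finset α}
    (hs : 0 ≤ w s ∧ w s ≤ c) (hs' : 0 ≤ w s' ∧ w s' ≤ c) (h : s ⊆ s') :
    |w s' - w s| ≤ c * (#s' - #s) := by
  rcases h.eq_or_ssubset with rfl | hlt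
  · simp
  · have hcard : (#s : ℝ) + 1 ≤ #s' := by exact_mod_cast card_lt_card hlt
    calc |w s' - w s| ≤ c := abs_sub_le_of_nonneg_of_le hs'.1 hs'.2 hs.1 hs.2
      _ ≤ c * (#s' - #s) := le_mul_of_one_le_right (hs.1.trans hs.2) (by linarith)

section

variable [DecidableEq α] (R : Finset α) (c : ℝ)

noncomputable def lowerTerm (t s : Finset α) : ℝ :=
  if t ⊆ R then 1 - c * #s else 0

noncomputable def upperTerm (t s : Finset α) : ℝ :=
  if R ⊆ t then 1 + c * #s else 0

noncomputable def Fpair (w : Finset α → ℝ) (t s : Finset α) : ℝ :=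
  2 - lowerTerm R c t s - upperTerm R c t s + if t = R then w s else 0

variable {R c}

lemma mul_card_union_add_mul_card_inter (c : ℝ) (x y : Finset α) :
    c * #(x ∪ y) + c * #(x ∩ y) = c * #x + c * #y := by
  have h : (#(x ∪ y) : ℝ) + #(x ∩ y) = #x + #y := by
    exact_mod_cast card_union_add_card_inter x y
  linear_combination c * h

lemma lowerTerm_add_le (hc : 0 ≤ c) {x y : Finset α} (hxy : c * #(x ∩ y) ≤ 1) (a b : Finset α) :
    lowerTerm R c a x + lowerTerm R c b y
      ≤ lowerTerm R c (a ∪ b) (x ∪ y) + lowerTerm R c (a ∩ b) (x ∩ y) := by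
  have hix : c * #(x ∩ y) ≤ c * #x := by gcongr; exact inter_subset_left
  have hiy : c * #(x ∩ y) ≤ c * #y := by gcongr; exact inter_subset_right
  have hcard := mul_card_union_add_mul_card_inter c x y
  unfold lowerTerm
  by_cases ha : a ⊆ R <;> by_cases hb : b ⊆ R
  · rw [if_pos ha, if_pos hb, if_pos (union_subset ha hb), if_pos (inter_subset_left.trans ha)]
    linarith
  · rw [if_pos ha, if_neg hb, if_neg (fun h => hb (subset_union_right.trans h)),
      if_pos (inter_subset_left.trans ha)]
    linarith
  · rw [if_neg ha, if_pos hb, if_neg (fun h => ha (subset_union_left.trans h)),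
      if_pos (inter_subset_right.trans hb)]
    linarith
  · rw [if_neg ha, if_neg hb, if_neg (fun h => ha (subset_union_left.trans h))]
    split_ifs <;> linarith

lemma upperTerm_add_le (hc : 0 ≤ c) (a b x y : Finset α) :
    upperTerm R c a x + upperTerm R c b y
      ≤ upperTerm R c (a ∪ b) (x ∪ y) + upperTerm R c (a ∩ b) (x ∩ y) := by
  have hxu : c * #x ≤ c * #(x ∪ y) := by gcongr; exact subset_union_left
  have hyu : c * #y ≤ c * #(x ∪ y) := by gcongr; exact subset_union_right
  have hu : 0 ≤ c * #(x ∪ y) := by positivity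
  have hcard := mul_card_union_add_mul_card_inter c x y
  unfold upperTerm
  by_cases ha : R ⊆ a <;> by_cases hb : R ⊆ b
  · rw [if_pos ha, if_pos hb, if_pos (ha.trans subset_union_left), if_pos (subset_inter ha hb)]
    linarith
  · rw [if_pos ha, if_neg hb, if_pos (ha.trans subset_union_left),
      if_neg (fun h => hb (h.trans inter_subset_right))]
    linarith
  · rw [if_neg ha, if_pos hb, if_pos (hb.trans subset_union_right),
      if_neg (fun h => ha (h.trans inter_subset_left))]
    linarith
  · rw [if_neg ha, if_neg hb, if_neg (fun h : R ⊆ a ∩ b => ha (h.trans inter_subset_left))]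
    split_ifs <;> linarith

variable {w : Finset α → ℝ} {t s : Finset α}

lemma Fpair_of_ne (h : t ≠ R) :
    Fpair R c w t s = 2 - lowerTerm R c t s - upperTerm R c t s := by
  simp [Fpair, h]

lemma Fpair_self : Fpair R c w R s = w s := by
  simp only [Fpair, lowerTerm, upperTerm, Subset.refl, if_true]
  ring

lemma Fpair_of_ssubset (h : t ⊂ R) : Fpair R c w t s = 1 + c * #s := by
  simp only [Fpair, lowerTerm, upperTerm, if_pos h.subset, if_neg h.not_subset, if_neg h.ne]
  ring

lemma Fpair_of_ssuperset (h : R ⊂ t) : Fpair R c w t s = 1 - c * #s := by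
  simp only [Fpair, lowerTerm, upperTerm, if_neg h.not_subset, if_pos h.subset, if_neg h.ne']
  ring

variable {B x y : Finset α}

lemma Fpair_submodular_of_union_eq (hw : ∀ s ⊆ B, 0 ≤ w s ∧ w s ≤ c) (hx : x ⊆ B)
    (hy : y ⊆ B) (hxy : c * #(x ∩ y) + c ≤ 1) {a b : Finset α} (hu : a ∪ b = R)
    (hi : a ∩ b ≠ R) :
    Fpair R c w (a ∪ b) (x ∪ y) + Fpair R c w (a ∩ b) (x ∩ y)
      ≤ Fpair R c w a x + Fpair R c w b y := by
  have hcard := mul_card_union_add_mul_card_inter c x y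
  have hxu := abs_le.mp <| abs_sub_le_mul_card_sub (hw x hx) (hw _ (union_subset hx hy))
    (subset_union_left (s₂ := y))
  have hyu := abs_le.mp <| abs_sub_le_mul_card_sub (hw y hy) (hw _ (union_subset hx hy))
    (subset_union_right (s₁ := x))
  have hiR : a ∩ b ⊂ R := (hu ▸ inter_subset_left.trans subset_union_left).ssubset_of_ne hi
  rw [hu, Fpair_self, Fpair_of_ssubset hiR]
  rcases (hu ▸ subset_union_left : a ⊆ R).eq_or_ssubset with ha | ha <;>
    rcases (hu ▸ subset_union_right : b ⊆ R).eq_or_ssubset with hb | hb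
  · exact absurd (by rw [ha, hb, inter_self]) hi
  · rw [ha, Fpair_self, Fpair_of_ssubset hb]
    linarith [hxu.2]
  · rw [hb, Fpair_self, Fpair_of_ssubset ha]
    linarith [hyu.2]
  · rw [Fpair_of_ssubset ha, Fpair_of_ssubset hb]
    have hc : 0 ≤ c := (hw x hx).1.trans (hw x hx).2
    have : 0 ≤ c * #x + c * #y := by positivity
    linarith [(hw _ (union_subset hx hy)).2]

lemma Fpair_submodular_of_inter_eq (hw : ∀ s ⊆ B, 0 ≤ w s ∧ w s ≤ c) (hx : x ⊆ B)
    (hy : y ⊆ B) (hxy : c * #(x ∩ y) + c ≤ 1) {a b : Finset α} (hu : a ∪ b ≠ R)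
    (hi : a ∩ b = R) :
    Fpair R c w (a ∪ b) (x ∪ y) + Fpair R c w (a ∩ b) (x ∩ y)
      ≤ Fpair R c w a x + Fpair R c w b y := by
  have hcard := mul_card_union_add_mul_card_inter c x y
  have hix := abs_le.mp <| abs_sub_le_mul_card_sub (hw _ (inter_subset_left.trans hx)) (hw x hx)
    (inter_subset_left (s₂ := y))
  have hiy := abs_le.mp <| abs_sub_le_mul_card_sub (hw _ (inter_subset_left.trans hx)) (hw y hy)
    (inter_subset_right (s₁ := x))
  have huR : R ⊂ a ∪ b := (hi ▸ inter_subset_left.trans subset_union_left).ssubset_of_ne hu.symm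
  rw [hi, Fpair_self, Fpair_of_ssuperset huR]
  rcases (hi ▸ inter_subset_left : R ⊆ a).eq_or_ssubset with ha | ha <;>
    rcases (hi ▸ inter_subset_right : R ⊆ b).eq_or_ssubset with hb | hb
  · exact absurd (by rw [← ha, ← hb, union_self]) hu
  · rw [← ha, Fpair_self, Fpair_of_ssuperset hb]
    linarith [hix.1]
  · rw [← hb, Fpair_self, Fpair_of_ssuperset ha]
    linarith [hiy.1]
  · rw [Fpair_of_ssuperset ha, Fpair_of_ssuperset hb]
    linarith [(hw (x ∩ y) (inter_subset_left.trans hx)).2]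

lemma Fpair_submodular_of_ne (hw : ∀ s ⊆ B, 0 ≤ w s ∧ w s ≤ c) (hx : x ⊆ B)
    (hy : y ⊆ B) (hxy : c * #(x ∩ y) + c ≤ 1) {a b : Finset α} (hu : a ∪ b ≠ R)
    (hi : a ∩ b ≠ R) :
    Fpair R c w (a ∪ b) (x ∪ y) + Fpair R c w (a ∩ b) (x ∩ y)
      ≤ Fpair R c w a x + Fpair R c w b y := by
  have hc : 0 ≤ c := (hw x hx).1.trans (hw x hx).2
  have hFa : 2 - lowerTerm R c a x - upperTerm R c a x ≤ Fpair R c w a x := by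
    unfold Fpair; split_ifs <;> linarith [(hw x hx).1]
  have hFb : 2 - lowerTerm R c b y - upperTerm R c b y ≤ Fpair R c w b y := by
    unfold Fpair; split_ifs <;> linarith [(hw y hy).1]
  rw [Fpair_of_ne hu, Fpair_of_ne hi]
  linarith [lowerTerm_add_le (R := R) hc (by linarith : c * #(x ∩ y) ≤ 1) a b,
    upperTerm_add_le (R := R) hc a b x y]

theorem Fpair_submodular (hcB : c * (#B + 1) ≤ 1) (hw : ∀ s ⊆ B, 0 ≤ w s ∧ w s ≤ c)
    (hwsub : ∀ x ⊆ B, ∀ y ⊆ B, w (x ∪ y) + w (x ∩ y) ≤ w x + w y) (hx : x ⊆ B) (hy : y ⊆ B)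
    (a b : Finset α) :
    Fpair R c w (a ∪ b) (x ∪ y) + Fpair R c w (a ∩ b) (x ∩ y)
      ≤ Fpair R c w a x + Fpair R c w b y := by
  have hxy : c * #(x ∩ y) + c ≤ 1 := by
    have hc : 0 ≤ c := (hw x hx).1.trans (hw x hx).2
    have : (#(x ∩ y) : ℝ) ≤ #B := by exact_mod_cast card_le_card (inter_subset_left.trans hx)
    nlinarith
  by_cases hu : a ∪ b = R <;> by_cases hi : a ∩ b = R
  · have ha : a = R := subset_antisymm (hu ▸ subset_union_left) (hi ▸ inter_subset_left)
    have hb : b = R := subset_antisymm (hu ▸ subset_union_right) (hi ▸ inter_subset_right)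
    simpa only [ha, hb, union_self, inter_self, Fpair_self] using hwsub x hx y hy
  · exact Fpair_submodular_of_union_eq hw hx hy hxy hu hi
  · exact Fpair_submodular_of_inter_eq hw hx hy hxy hu hi
  · exact Fpair_submodular_of_ne hw hx hy hxy hu hi

end

lemma Fbb_eq_Fpair [DecidableEq α] (n : ℕ) (A R B : Finset α) (M : ℝ) (g : Finset α → ℝ)
    (S : Finset α) :
    Fbb n A R B M g S
      = Fpair R (1 / (2 * n)) (fun s => 1 / (4 * M * n) * g s) (S ∩ A) (S ∩ B) := by
  unfold Fbb fAR phi Fpair lowerTerm upperTerm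
  by_cases h₁ : S ∩ A ⊆ R <;> by_cases h₂ : R ⊆ S ∩ A
  · simp only [subset_antisymm h₁ h₂, ssubset_irrefl, or_self, if_true, if_false, Subset.refl]
    ring
  · have h : S ∩ A ⊂ R := h₁.ssubset_of_ne (fun h => h₂ h.ge)
    simp only [h, h.ne, h₁, h₂, true_or, if_true, if_false]
    ring
  · have h : R ⊂ S ∩ A := h₂.ssubset_of_ne (fun h => h₁ h.ge)
    have h₃ : ¬ S ∩ A ⊂ R := fun h => h₁ h.subset
    simp only [h, h.ne', h₁, h₂, h₃, or_true, if_true, if_false]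
    ring
  · have h₃ : ¬ S ∩ A ⊂ R := fun h => h₁ h.subset
    have h₄ : ¬ R ⊂ S ∩ A := fun h => h₂ h.subset
    have h₅ : S ∩ A ≠ R := fun h => h₁ h.le
    simp only [h₁, h₂, h₃, h₄, h₅, or_self, if_false]
    ring

theorem Fbb_submodular_general [DecidableEq α] (V A R : Finset α) (hV : 1 ≤ V.card)
    (M : ℝ) (hM : 0 < M) (g : Finset α → ℝ)
    (hgsub : ∀ X ⊆ V \ A, ∀ Y ⊆ V \ A, g (X ∪ Y) + g (X ∩ Y) ≤ g X + g Y)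
    (hg : ∀ T ⊆ V \ A, 0 ≤ g T ∧ g T ≤ M) :
    ∀ X ⊆ V, ∀ Y ⊆ V,
      Fbb V.card A R (V \ A) M g (X ∪ Y) + Fbb V.card A R (V \ A) M g (X ∩ Y)
        ≤ Fbb V.card A R (V \ A) M g X + Fbb V.card A R (V \ A) M g Y := by
  intro X _ Y _
  have hn : (1 : ℝ) ≤ #V := by exact_mod_cast hV
  have hB : (#(V \ A) : ℝ) ≤ #V := by exact_mod_cast card_le_card sdiff_subset
  simp only [Fbb_eq_Fpair, union_inter_distrib_right, inter_inter_distrib_right X Y]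
  refine Fpair_submodular ?_ (fun s hs => ?_) (fun x hx y hy => ?_) inter_subset_right
    inter_subset_right _ _
  · rw [div_mul_eq_mul_div, one_mul, div_le_one (by positivity)]
    linarith
  · obtain ⟨h₀, h₁⟩ := hg s hs
    refine ⟨by positivity, ?_⟩
    calc 1 / (4 * M * #V) * g s ≤ 1 / (4 * M * #V) * M := by gcongr
      _ = 1 / (4 * #V) := by field_simp
      _ ≤ 1 / (2 * #V) := by gcongr; norm_num
  · have := mul_le_mul_of_nonneg_left (hgsub x hx y hy) (by positivity : 0 ≤ 1 / (4 * M * #V))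
    linarith

/-- if `g` is submodular and `0 ≤ g ≤ M` on subsets of `B`, then `F` is
submodular: `F(X) + F(Y) ≥ F(X ∪ Y) + F(X ∩ Y)` for all `X, Y ⊆ V`. -/
theorem Fbb_submodular [DecidableEq α] (V A R : Finset α) (hV : 1 ≤ V.card)
    (hA : A.Nonempty) (hR : R.Nonempty) (hRA : R ⊆ A) (hAV : A ⊆ V)
    (M : ℝ) (hM : 0 < M) (g : Finset α → ℝ)
    (hgsub : ∀ X ⊆ V \ A, ∀ Y ⊆ V \ A, g (X ∪ Y) + g (X ∩ Y) ≤ g X + g Y)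
    (hg : ∀ T ⊆ V \ A, 0 ≤ g T ∧ g T ≤ M) :
    ∀ X ⊆ V, ∀ Y ⊆ V,
      Fbb V.card A R (V \ A) M g (X ∪ Y) + Fbb V.card A R (V \ A) M g (X ∩ Y)
        ≤ Fbb V.card A R (V \ A) M g X + Fbb V.card A R (V \ A) M g Y :=
  Fbb_submodular_general V A R hV M hM g hgsub hg
end

section
/- Let X, Y ⊆ V be such that X_A is neither a subset nor a superset of R, and Y_A is neither a subset nor a superset of R. Then F(X) + F(Y) ≥ F(X ∪ Y) + F(X ∩ Y). -/
open Finset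

variable {α : Type*}

section

variable [DecidableEq α] {n : ℕ} {A R B S T : Finset α} {M : ℝ} {g : Finset α → ℝ}

lemma fAR_le_two (R T : Finset α) : fAR R T ≤ 2 := by
  unfold fAR; split_ifs <;> norm_num

lemma fAR_eq_one_of_ssubset (h : T ⊂ R) : fAR R T = 1 := by
  simp [fAR, h.ne, h]

lemma phi_le_card (A R B S : Finset α) : phi A R B S ≤ (S ∩ B).card := by
  unfold phi; split_ifs <;> simp

lemma phi_nonpos_of_not_ssubset (h : ¬ S ∩ A ⊂ R) : phi A R B S ≤ 0 := by
  rw [phi, if_neg h]; split_ifs <;> simp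

lemma Fbb_eq_of_ne (h : S ∩ A ≠ R) :
    Fbb n A R B M g S = fAR R (S ∩ A) + phi A R B S / (2 * n) := by
  simp [Fbb, h, div_eq_inv_mul]

lemma Fbb_eq_two_of_incomparable (h : ¬ S ∩ A ⊆ R ∧ ¬ R ⊆ S ∩ A) : Fbb n A R B M g S = 2 := by
  have hne : S ∩ A ≠ R := fun h' => h.1 h'.le
  have hsub : ¬ S ∩ A ⊂ R := fun h' => h.1 h'.subset
  have hsup : ¬ R ⊂ S ∩ A := fun h' => h.2 h'.subset
  simp [Fbb_eq_of_ne hne, fAR, phi, hne, hsub, hsup]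

/-- Below `R` the bonus `φ/(2n) ≤ 1/2` only lifts `f = 1`; elsewhere `φ ≤ 0`. -/
lemma Fbb_le_two_of_ne (h : S ∩ A ≠ R) (hcard : (S ∩ B).card ≤ n) : Fbb n A R B M g S ≤ 2 := by
  rw [Fbb_eq_of_ne h]
  by_cases hsub : S ∩ A ⊂ R
  · have hphi : phi A R B S / (2 * n) ≤ 1 := by
      rcases n.eq_zero_or_pos with rfl | hn
      · simp
      rw [div_le_one (by positivity)]
      have : (S ∩ B).card ≤ (n : ℝ) := by exact_mod_cast hcard
      linarith [phi_le_card A R B S]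
    linarith [fAR_eq_one_of_ssubset hsub]
  · have : phi A R B S / (2 * n) ≤ 0 :=
      div_nonpos_of_nonpos_of_nonneg (phi_nonpos_of_not_ssubset hsub) (by positivity)
    linarith [fAR_le_two R (S ∩ A)]

end

theorem Fbb_case1_general [DecidableEq α] (V A R : Finset α)
    (M : ℝ) (g : Finset α → ℝ)

    (X Y : Finset α)
    (hXA : ¬ X ∩ A ⊆ R ∧ ¬ R ⊆ X ∩ A) (hYA : ¬ Y ∩ A ⊆ R ∧ ¬ R ⊆ Y ∩ A) :
    Fbb V.card A R (V \ A) M g (X ∪ Y) + Fbb V.card A R (V \ A) M g (X ∩ Y)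
      ≤ Fbb V.card A R (V \ A) M g X + Fbb V.card A R (V \ A) M g Y := by
  have hcard (S : Finset α) : (S ∩ (V \ A)).card ≤ V.card :=
    card_le_card (inter_subset_right.trans sdiff_subset)
  have hunion : (X ∪ Y) ∩ A ≠ R := fun h =>
    hXA.1 (h ▸ inter_subset_inter_right subset_union_left)
  have hinter : (X ∩ Y) ∩ A ≠ R := fun h =>
    hXA.2 (h ▸ inter_subset_inter_right inter_subset_left)
  rw [Fbb_eq_two_of_incomparable hXA, Fbb_eq_two_of_incomparable hYA]
  linarith [Fbb_le_two_of_ne (M := M) (g := g) hunion (hcard _),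
    Fbb_le_two_of_ne (M := M) (g := g) hinter (hcard _)]

/-- if X ∩ A and Y ∩ A are each neither a subset nor a superset of R, then F(X) + F(Y) ≥ F(X ∪ Y) + F(X ∩ Y). -/
theorem Fbb_case1 [DecidableEq α] (V A R : Finset α) (hV : 1 ≤ V.card)
    (hA : A.Nonempty) (hR : R.Nonempty) (hRA : R ⊆ A) (hAV : A ⊆ V)
    (M : ℝ) (hM : 0 < M) (g : Finset α → ℝ)

    (X Y : Finset α) (hX : X ⊆ V) (hY : Y ⊆ V)
    (hXA : ¬ X ∩ A ⊆ R ∧ ¬ R ⊆ X ∩ A) (hYA : ¬ Y ∩ A ⊆ R ∧ ¬ R ⊆ Y ∩ A) :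
    Fbb V.card A R (V \ A) M g (X ∪ Y) + Fbb V.card A R (V \ A) M g (X ∩ Y)
      ≤ Fbb V.card A R (V \ A) M g X + Fbb V.card A R (V \ A) M g Y :=
  Fbb_case1_general V A R M g X Y hXA hYA
end

section
/- Let X, Y ⊆ V be such that X_A ⊊ R ⊊ Y_A. Then F(X) + F(Y) ≥ F(X ∪ Y) + F(X ∩ Y). -/
open Finset

variable {α : Type*}

/-! Both `X` and `X ∩ Y` lie strictly below `R` on `A`, and both `Y` and `X ∪ Y` strictly above it, so
`f_{A,R}` is `1` at all four sets and the `g`-term vanishes. What remains is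
`|(X ∩ Y)_B| + |Y_B| ≤ |X_B| + |(X ∪ Y)_B|`, which follows from `|(X ∪ Y)_B| + |(X ∩ Y)_B| = |X_B| + |Y_B|`
and `(X ∩ Y)_B ⊆ X_B`. -/

section

variable [DecidableEq α]

theorem fAR_of_ssubset {R T : Finset α} (h : T ⊂ R) : fAR R T = 1 := by
  simp [fAR, h.ne, h]

theorem fAR_of_ssuperset {R T : Finset α} (h : R ⊂ T) : fAR R T = 1 := by
  simp [fAR, h.ne', h]

theorem phi_of_ssubset {A R B S : Finset α} (h : S ∩ A ⊂ R) :
    phi A R B S = (S ∩ B).card := by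
  simp [phi, h]

theorem phi_of_ssuperset {A R B S : Finset α} (h : R ⊂ S ∩ A) :
    phi A R B S = -((S ∩ B).card : ℝ) := by
  simp [phi, h, h.not_gt]

theorem Fbb_of_ssubset {n : ℕ} {A R B S : Finset α} {M : ℝ} {g : Finset α → ℝ}
    (h : S ∩ A ⊂ R) :
    Fbb n A R B M g S = 1 + 1 / (2 * (n : ℝ)) * (S ∩ B).card := by
  simp [Fbb, fAR_of_ssubset h, phi_of_ssubset h, h.ne]

theorem Fbb_of_ssuperset {n : ℕ} {A R B S : Finset α} {M : ℝ} {g : Finset α → ℝ}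
    (h : R ⊂ S ∩ A) :
    Fbb n A R B M g S = 1 - 1 / (2 * (n : ℝ)) * (S ∩ B).card := by
  simp [Fbb, fAR_of_ssuperset h, phi_of_ssuperset h, h.ne', sub_eq_add_neg]

theorem card_inter_inter_add_card_inter_le (X Y B : Finset α) :
    (X ∩ Y ∩ B).card + (Y ∩ B).card ≤ (X ∩ B).card + ((X ∪ Y) ∩ B).card := by
  have hmod := card_union_add_card_inter (X ∩ B) (Y ∩ B)
  have hsub : (X ∩ Y ∩ B).card ≤ (X ∩ B).card :=
    card_le_card (inter_subset_inter_right inter_subset_left)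
  rw [← union_inter_distrib_right, ← inter_inter_distrib_right] at hmod
  omega

end

theorem Fbb_case24_general [DecidableEq α] (V A R : Finset α)
    (M : ℝ) (g : Finset α → ℝ)

    (X Y : Finset α)
    (hXA : X ∩ A ⊂ R) (hYA : R ⊂ Y ∩ A) :
    Fbb V.card A R (V \ A) M g (X ∪ Y) + Fbb V.card A R (V \ A) M g (X ∩ Y)
      ≤ Fbb V.card A R (V \ A) M g X + Fbb V.card A R (V \ A) M g Y := by
  have hU : R ⊂ (X ∪ Y) ∩ A := hYA.trans_le (inter_subset_inter_right subset_union_right)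
  have hI : X ∩ Y ∩ A ⊂ R := (inter_subset_inter_right inter_subset_left).trans_lt hXA
  rw [Fbb_of_ssuperset hU, Fbb_of_ssubset hI, Fbb_of_ssubset hXA, Fbb_of_ssuperset hYA]
  have hcard : ((X ∩ Y ∩ (V \ A)).card : ℝ) + (Y ∩ (V \ A)).card
      ≤ (X ∩ (V \ A)).card + ((X ∪ Y) ∩ (V \ A)).card := by
    exact_mod_cast card_inter_inter_add_card_inter_le X Y (V \ A)
  have hc : (0 : ℝ) ≤ 1 / (2 * (V.card : ℝ)) := by positivity
  linarith [mul_le_mul_of_nonneg_left hcard hc]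

/-- if X ∩ A ⊊ R ⊊ Y ∩ A, then F(X) + F(Y) ≥ F(X ∪ Y) + F(X ∩ Y). -/
theorem Fbb_case24 [DecidableEq α] (V A R : Finset α) (hV : 1 ≤ V.card)
    (hA : A.Nonempty) (hR : R.Nonempty) (hRA : R ⊆ A) (hAV : A ⊆ V)
    (M : ℝ) (hM : 0 < M) (g : Finset α → ℝ)

    (X Y : Finset α) (hX : X ⊆ V) (hY : Y ⊆ V)
    (hXA : X ∩ A ⊂ R) (hYA : R ⊂ Y ∩ A) :
    Fbb V.card A R (V \ A) M g (X ∪ Y) + Fbb V.card A R (V \ A) M g (X ∩ Y)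
      ≤ Fbb V.card A R (V \ A) M g X + Fbb V.card A R (V \ A) M g Y :=
  Fbb_case24_general V A R M g X Y hXA hYA
end

section
/- Assume 0 ≤ g(T) ≤ M for all T ⊆ B. Let X, Y ⊆ V be such that X_A = R and Y_A is neither a subset nor a superset of R. Then F(X) + F(Y) ≥ F(X ∪ Y) + F(X ∩ Y). -/
open Finset

variable {α : Type*}

/-!
On `X` the function `F` equals its small `g`-term, which is nonnegative, and on `Y` it equals `2`,
the maximum of `f_{A,R}`. Adjoining `Y ∩ A` to `R` gives a strict superset and intersecting gives a
strict subset, so `F(X ∪ Y) + F(X ∩ Y) = 2 + (|X ∩ Y ∩ B| - |(X ∪ Y) ∩ B|) / (2n) ≤ 2`.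
-/

namespace Fbb

variable [DecidableEq α] {n : ℕ} {A R B S : Finset α} {M : ℝ} {g : Finset α → ℝ}

theorem eq_of_inter_eq (hS : S ∩ A = R) :
    Fbb n A R B M g S = 1 / (4 * M * n) * g (S ∩ B) := by
  simp [Fbb, fAR, phi, hS]

theorem eq_two_of_incomparable (h₁ : ¬ S ∩ A ⊆ R) (h₂ : ¬ R ⊆ S ∩ A) :
    Fbb n A R B M g S = 2 := by
  have hne : S ∩ A ≠ R := fun h => h₁ h.le
  have hsub : ¬ S ∩ A ⊂ R := fun h => h₁ h.subset
  have hsup : ¬ R ⊂ S ∩ A := fun h => h₂ h.subset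
  simp [Fbb, fAR, phi, hne, hsub, hsup]

theorem eq_of_ssubset (hS : S ∩ A ⊂ R) :
    Fbb n A R B M g S = 1 + 1 / (2 * n) * #(S ∩ B) := by
  simp [Fbb, fAR, phi, hS, hS.ne]

theorem eq_of_ssuperset (hS : R ⊂ S ∩ A) :
    Fbb n A R B M g S = 1 - 1 / (2 * n) * #(S ∩ B) := by
  have hsub : ¬ S ∩ A ⊂ R := asymm hS
  simp [Fbb, fAR, phi, hS, hS.ne', hsub]
  ring

end Fbb

theorem Fbb_case31_general [DecidableEq α] (V A R : Finset α)
    (M : ℝ) (g : Finset α → ℝ)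
    (hg : ∀ T ⊆ V \ A, 0 ≤ g T ∧ g T ≤ M)
    (X Y : Finset α)
    (hXA : X ∩ A = R) (hYA : ¬ Y ∩ A ⊆ R ∧ ¬ R ⊆ Y ∩ A) :
    Fbb V.card A R (V \ A) M g (X ∪ Y) + Fbb V.card A R (V \ A) M g (X ∩ Y)
      ≤ Fbb V.card A R (V \ A) M g X + Fbb V.card A R (V \ A) M g Y := by
  obtain ⟨hYR, hRY⟩ := hYA
  have hunion : R ⊂ (X ∪ Y) ∩ A := by
    rw [union_inter_distrib_right, hXA]
    exact left_lt_sup.2 hYR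
  have hinter : (X ∩ Y) ∩ A ⊂ R := by
    rw [inter_inter_distrib_right, hXA]
    exact inf_lt_left.2 hRY
  obtain ⟨hg₀, hgM⟩ := hg (X ∩ (V \ A)) inter_subset_right
  have hcard : (#(X ∩ Y ∩ (V \ A)) : ℝ) ≤ #((X ∪ Y) ∩ (V \ A)) := by
    gcongr
    exact inter_subset_left.trans subset_union_left
  rw [Fbb.eq_of_ssuperset hunion, Fbb.eq_of_ssubset hinter, Fbb.eq_of_inter_eq hXA,
    Fbb.eq_two_of_incomparable hYR hRY]
  have hgX : 0 ≤ 1 / (4 * M * V.card) * g (X ∩ (V \ A)) := by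
    have : 0 ≤ M := hg₀.trans hgM
    positivity
  have hphi := mul_le_mul_of_nonneg_left hcard (by positivity : (0 : ℝ) ≤ 1 / (2 * V.card))
  linarith

/-- if 0 ≤ g ≤ M on subsets of B, X ∩ A = R, and Y ∩ A is neither a subset nor a superset of R, then F(X) + F(Y) ≥ F(X ∪ Y) + F(X ∩ Y). -/
theorem Fbb_case31 [DecidableEq α] (V A R : Finset α) (hV : 1 ≤ V.card)
    (hA : A.Nonempty) (hR : R.Nonempty) (hRA : R ⊆ A) (hAV : A ⊆ V)
    (M : ℝ) (hM : 0 < M) (g : Finset α → ℝ)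
    (hg : ∀ T ⊆ V \ A, 0 ≤ g T ∧ g T ≤ M)
    (X Y : Finset α) (hX : X ⊆ V) (hY : Y ⊆ V)
    (hXA : X ∩ A = R) (hYA : ¬ Y ∩ A ⊆ R ∧ ¬ R ⊆ Y ∩ A) :
    Fbb V.card A R (V \ A) M g (X ∪ Y) + Fbb V.card A R (V \ A) M g (X ∩ Y)
      ≤ Fbb V.card A R (V \ A) M g X + Fbb V.card A R (V \ A) M g Y :=
  Fbb_case31_general V A R M g hg X Y hXA hYA
end

section
/- The set S* := R_1 ∪ R_2 ∪ ⋯ ∪ R_ℓ is the unique minimizer of F: F(S*) = 0, and F(S) > 0 for every S ⊆ V with S ≠ S*. -/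
open Finset

variable {α : Type*}

/-- The explicit layered function `F_{𝒜,ℛ}` of the family `𝓕_r(V)`.  The parts are
indexed `0, 1, …, ℓ-1`; for a set `S`, if `S ∩ A k = R k` for all `k < ℓ` the value is `0`,
and otherwise, letting `kS` be the least index `k < ℓ` with `S ∩ A k ≠ R k` and
`B kS = A kS ∪ ⋯ ∪ A (ℓ-1)`, the value is
`(∏_{j=0}^{kS-1} 1/(8(n - 2jr))) ⋅ (f_{A kS, R kS}(S ∩ A kS)
  + (1/(2|B kS|)) ⋅ φ_{B kS, A kS, R kS}(S ∩ B kS))`. -/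
noncomputable def Ffam [DecidableEq α] (n r ℓ : ℕ) (A R : ℕ → Finset α)
    (S : Finset α) : ℝ :=
  if h : ∃ k, k < ℓ ∧ S ∩ A k ≠ R k then
    (∏ j ∈ Finset.range (Nat.find h), (1 : ℝ) / (8 * ((n : ℝ) - 2 * j * r))) *
      (fAR (R (Nat.find h)) (S ∩ A (Nat.find h)) +
        (1 / (2 * (((Finset.Ico (Nat.find h) ℓ).biUnion A).card : ℝ))) *
          phi (A (Nat.find h)) (R (Nat.find h))
            (((Finset.Ico (Nat.find h) ℓ).biUnion A) \ A (Nat.find h))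
            (S ∩ (Finset.Ico (Nat.find h) ℓ).biUnion A))
  else 0

section Layers

variable [DecidableEq α]

lemma one_le_fAR {R T : Finset α} (hT : T ≠ R) : 1 ≤ fAR R T := by
  rw [fAR, if_neg hT]
  split_ifs <;> norm_num

lemma neg_card_inter_le_phi (A R B S : Finset α) : -((S ∩ B).card : ℝ) ≤ phi A R B S := by
  unfold phi
  split_ifs <;> simp

/-- The normalisation `1 / (2|W|)` keeps the `φ`-term above `-1/2`, so it never cancels the
`f`-term, which is at least `1` off `R`. -/
lemma fAR_add_phi_pos {A R T W S : Finset α} (hT : T ≠ R) (hAW : A ⊆ W) (hA : A.Nonempty) :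
    0 < fAR R T + 1 / (2 * (W.card : ℝ)) * phi A R (W \ A) S := by
  have hW : (0 : ℝ) < W.card := by exact_mod_cast (hA.mono hAW).card_pos
  have hsdiff : ((W \ A).card : ℝ) < W.card := by
    exact_mod_cast card_lt_card (sdiff_ssubset hAW hA)
  have hphi : -(W.card : ℝ) < phi A R (W \ A) S :=
    calc -(W.card : ℝ) < -((W \ A).card : ℝ) := neg_lt_neg hsdiff
      _ ≤ -((S ∩ (W \ A)).card : ℝ) := by
        gcongr
        exact inter_subset_right
      _ ≤ phi A R (W \ A) S := neg_card_inter_le_phi A R _ S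
  have hscaled : -(1 / 2 : ℝ) < 1 / (2 * (W.card : ℝ)) * phi A R (W \ A) S := by
    rw [div_mul_eq_mul_div, one_mul, lt_div_iff₀ (by positivity)]
    linarith
  linarith [one_le_fAR hT]

lemma biUnion_inter_eq_of_pairwiseDisjoint {ι : Type*} {s : Finset ι} {A R : ι → Finset α}
    (hdisj : (s : Set ι).PairwiseDisjoint A) (hRA : ∀ i ∈ s, R i ⊆ A i) {k : ι} (hk : k ∈ s) :
    s.biUnion R ∩ A k = R k := by
  ext x
  simp only [mem_inter, mem_biUnion]
  constructor
  · rintro ⟨⟨i, hi, hxR⟩, hxA⟩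
    obtain rfl | hik := eq_or_ne i k
    · exact hxR
    · exact absurd hxA (disjoint_left.mp (hdisj hi hk hik) (hRA i hi hxR))
  · exact fun hx => ⟨⟨k, hk, hx⟩, hRA k hk hx⟩

lemma eq_biUnion_of_inter_eq {ι : Type*} {s : Finset ι} {A R : ι → Finset α} {S : Finset α}
    (hS : S ⊆ s.biUnion A) (htrace : ∀ k ∈ s, S ∩ A k = R k) : S = s.biUnion R := by
  rw [← inter_eq_left.mpr hS, inter_biUnion]
  exact biUnion_congr rfl htrace

lemma Ffam_eq_zero {n r ℓ : ℕ} {A R : ℕ → Finset α} {S : Finset α}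
    (htrace : ∀ k < ℓ, S ∩ A k = R k) : Ffam n r ℓ A R S = 0 := by
  rw [Ffam, dif_neg]
  rintro ⟨k, hk, hne⟩
  exact hne (htrace k hk)

lemma Ffam_pos {n r ℓ : ℕ} (hr : 0 < r) (hn : 2 * r * ℓ ≤ n) {A R : ℕ → Finset α}
    (hRA : ∀ i < ℓ, R i ⊆ A i) {S : Finset α} (h : ∃ k < ℓ, S ∩ A k ≠ R k) :
    0 < Ffam n r ℓ A R S := by
  rw [Ffam, dif_pos h]
  obtain ⟨hkℓ, hne⟩ := Nat.find_spec h
  set k := Nat.find h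
  have hweight : ∀ j ∈ range k, (0 : ℝ) < 1 / (8 * ((n : ℝ) - 2 * j * r)) := by
    intro j hj
    have hjr : 2 * j * r < n := by
      have := mem_range.mp hj
      nlinarith
    have : (2 * j * r : ℝ) < n := by exact_mod_cast hjr
    have : (0 : ℝ) < 8 * ((n : ℝ) - 2 * j * r) := by linarith
    positivity
  have hAk : (A k).Nonempty := by
    rw [nonempty_iff_ne_empty]
    intro hAk
    have hRk : R k = ∅ := subset_empty.mp (hAk ▸ hRA k hkℓ)
    exact hne (by rw [hAk, hRk, inter_empty])
  exact mul_pos (prod_pos hweight)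
    (fAR_add_phi_pos hne (subset_biUnion_of_mem A (mem_Ico.mpr ⟨le_rfl, hkℓ⟩)) hAk)

end Layers

theorem Ffam_unique_minimizer_general [DecidableEq α] (V : Finset α) (n r ℓ : ℕ)
    (hr : 1 ≤ r) (hnrl : n = 2 * r * ℓ)
    (A R : ℕ → Finset α)
    (hdisj : ∀ i < ℓ, ∀ j < ℓ, i ≠ j → Disjoint (A i) (A j))
    (hunion : (Finset.range ℓ).biUnion A = V)
    (hRsub : ∀ i < ℓ, R i ⊆ A i) :
    Ffam n r ℓ A R ((Finset.range ℓ).biUnion R) = 0 ∧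
      ∀ S ⊆ V, S ≠ (Finset.range ℓ).biUnion R → 0 < Ffam n r ℓ A R S := by
  have hRA : ∀ i ∈ range ℓ, R i ⊆ A i := fun i hi => hRsub i (mem_range.mp hi)
  have hpair : ((range ℓ : Finset ℕ) : Set ℕ).PairwiseDisjoint A := fun i hi j hj hij =>
    hdisj i (mem_range.mp hi) j (mem_range.mp hj) hij
  refine ⟨Ffam_eq_zero fun k hk =>
    biUnion_inter_eq_of_pairwiseDisjoint hpair hRA (mem_range.mpr hk), fun S hS hSne => ?_⟩
  refine Ffam_pos hr hnrl.ge hRsub ?_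
  by_contra! htrace
  exact hSne (eq_biUnion_of_inter_eq (hunion ▸ hS) fun k hk => htrace k (mem_range.mp hk))

/-- the set `S* = R 0 ∪ R 1 ∪ ⋯ ∪ R (ℓ-1)` is the unique minimizer of `F`:
`F(S*) = 0` and `F(S) > 0` for every `S ⊆ V` with `S ≠ S*`. -/
theorem Ffam_unique_minimizer [DecidableEq α] (V : Finset α) (n r ℓ : ℕ) (hn : V.card = n)
    (hr : 1 ≤ r) (hl : 1 ≤ ℓ) (hnrl : n = 2 * r * ℓ)
    (A R : ℕ → Finset α)
    (hdisj : ∀ i < ℓ, ∀ j < ℓ, i ≠ j → Disjoint (A i) (A j))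
    (hunion : (Finset.range ℓ).biUnion A = V)
    (hAcard : ∀ i < ℓ, (A i).card = 2 * r)
    (hRsub : ∀ i < ℓ, R i ⊆ A i)
    (hRcard : ∀ i < ℓ, (R i).card = r) :
    Ffam n r ℓ A R ((Finset.range ℓ).biUnion R) = 0 ∧
      ∀ S ⊆ V, S ≠ (Finset.range ℓ).biUnion R → 0 < Ffam n r ℓ A R S :=
  Ffam_unique_minimizer_general V n r ℓ hr hnrl A R hdisj hunion hRsub
end
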